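/- arXiv:1502.00099 — 2 statements merged into one kernel-verified Lean document; each statement's English description precedes it below -/
import Mathlib

section
/- The 1-loop second crucial condition b₂⁽¹⁾ = ½(a₂⁽¹⁾ + b₁⁽¹⁾ − a₁⁽¹⁾ − b₀⁽¹⁾) is invariant under the finite renormalizations a₀⁽¹⁾ ↦ a₀⁽¹⁾+2iα₃s, a₁⁽¹⁾ ↦ a₁⁽¹⁾−i(α₆+α₇)s, a₂⁽¹⁾ ↦ a₂⁽¹⁾+i(α₄−α₆)s, b₀⁽¹⁾ ↦ b₀⁽¹⁾−iα₅s, b₁⁽¹⁾ ↦ b₁⁽¹⁾+i(α₄−α₅−α₇)s, b₂⁽¹⁾ ↦ b₂⁽¹⁾+iα₄s: that is, the quantity b₂⁽¹⁾ − ½(a₂⁽¹⁾ + b₁⁽¹⁾ − a₁⁽¹⁾ − b₀⁽¹⁾) is unchanged for all complex α₃,...,α₇ and all s ∈ ℂ. -/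
/-- the quantity b₂⁽¹⁾ − ½(a₂⁽¹⁾ + b₁⁽¹⁾ − a₁⁽¹⁾ − b₀⁽¹⁾)
is invariant under the finite renormalizations (4.4)-(4.9). -/
theorem stmt_3 (a0 a1 a2 b0 b1 b2 α3 α4 α5 α6 α7 s : ℂ) :
    (b2 + Complex.I * α4 * s)
      - (1 / 2) * ((a2 + Complex.I * (α4 - α6) * s)
        + (b1 + Complex.I * (α4 - α5 - α7) * s)
        - (a1 - Complex.I * (α6 + α7) * s)
        - (b0 - Complex.I * α5 * s))
    = b2 - (1 / 2) * (a2 + b1 - a1 - b0) := by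
  ring
end

section
/- For the solution family (4.15): all twelve geometric-interpretability conditions hold to first order. Specifically, with L ∈ ℝ, m, m_H > 0, l₁, β₁, β₂, β₃ ∈ ℝ, and coefficients as in (4.15), one has (to first order, i.e. as exact linear identities): l₁⁽¹⁾ − l₀⁽¹⁾ = ½(b₀⁽¹⁾ − a₁⁽¹⁾); l₂⁽¹⁾ = l₁⁽¹⁾; l₃⁽¹⁾ − l₀⁽¹⁾ = c₁⁽¹⁾ − a₁⁽¹⁾; l₄⁽¹⁾ − l₃⁽¹⁾ = b₀⁽¹⁾ − c₀⁽¹⁾; l₅⁽¹⁾ − 2l₀⁽¹⁾ = −a₁⁽¹⁾; l₆⁽¹⁾ − l₅⁽¹⁾ = b₀⁽¹⁾ − c₀⁽¹⁾; l₇⁽¹⁾ − 2l₀⁽¹⁾ = c₁⁽¹⁾ − 2a₁⁽¹⁾; l₈⁽¹⁾ − l₇⁽¹⁾ = b₀⁽¹⁾ − c₀⁽¹⁾; l₉⁽¹⁾ − l₇⁽¹⁾ = 2(b₀⁽¹⁾ − c₀⁽¹⁾); l₁₁⁽¹⁾ = 0; b₂⁽¹⁾ = ½(a₂⁽¹⁾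 + b₁⁽¹⁾ − a₁⁽¹⁾ − b₀⁽¹⁾). -/
/-- the solution family (4.15) satisfies all twelve
geometric-interpretability conditions to first order. -/
theorem stmt_17 (L m mH l1p β1 β2 β3 : ℝ) (hm : 0 < m) (hmH : 0 < mH) :
    let a0 := 2 * β1 * L
    let a1 := -4 * L
    let a2 := (β2 - β3) * L
    let b0 := (2 + 2 * l1p) * L
    let c0 := (2 + 2 * l1p) * L
    let b1 := (4 + 2 * l1p + β2 + β3) * L
    let b2 := (3 + β2) * L
    let c1 := -(6 * m ^ 2 / mH ^ 2 + 5 * mH ^ 2 / m ^ 2) * L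
    let l0 := -3 * L
    let l1 := l1p * L
    let l2 := l1p * L
    let l3 := (1 - 6 * m ^ 2 / mH ^ 2 - 5 * mH ^ 2 / m ^ 2) * L
    let l4 := (1 - 6 * m ^ 2 / mH ^ 2 - 5 * mH ^ 2 / m ^ 2) * L
    let l5 := -2 * L
    let l6 := -2 * L
    let l7 := (2 - 6 * m ^ 2 / mH ^ 2 - 5 * mH ^ 2 / m ^ 2) * L
    let l8 := (2 - 6 * m ^ 2 / mH ^ 2 - 5 * mH ^ 2 / m ^ 2) * L
    let l9 := (2 - 6 * m ^ 2 / mH ^ 2 - 5 * mH ^ 2 / m ^ 2) * L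
    let l11 := (0 : ℝ)
    (l1 - l0 = (1 / 2) * (b0 - a1)) ∧
    (l2 = l1) ∧
    (l3 - l0 = c1 - a1) ∧
    (l4 - l3 = b0 - c0) ∧
    (l5 - 2 * l0 = -a1) ∧
    (l6 - l5 = b0 - c0) ∧
    (l7 - 2 * l0 = c1 - 2 * a1) ∧
    (l8 - l7 = b0 - c0) ∧
    (l9 - l7 = 2 * (b0 - c0)) ∧
    (l11 = 0) ∧
    (b2 = (1 / 2) * (a2 + b1 - a1 - b0)) := by
  refine ⟨by ring, by ring, by ring, by ring, by ring, by ring, by ring, by ring, by ring, rfl, by ring⟩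
end
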